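/- Every subspace S of ℂ⁴ that equals its own J-orthogonal complement is of the form S_U = {v + vU : v ∈ V₊} for some unitary operator U : V₊ → V₋. -/

import Mathlib

open Matrix Complex

noncomputable def matJ : Matrix (Fin 4) (Fin 4) ℂ :=
  !![0, I, 0, 0; -I, 0, 0, 0; 0, 0, 0, I; 0, 0, -I, 0]

noncomputable def Pplus : Matrix (Fin 4) (Fin 4) ℂ := (1/2 : ℂ) • (1 + matJ)
noncomputable def Pminus : Matrix (Fin 4) (Fin 4) ℂ := (1/2 : ℂ) • (1 - matJ)
noncomputable def Vplus : Submodule ℂ (Fin 4 → ℂ) := LinearMap.range (Matrix.vecMulLinear Pplus)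
noncomputable def Vminus : Submodule ℂ (Fin 4 → ℂ) := LinearMap.range (Matrix.vecMulLinear Pminus)

/-- `U` is a unitary map from `V₊` onto `V₋` (w.r.t. the restricted standard
Hermitian inner products of rows). -/
def IsUnitaryPlusMinus (U : (Fin 4 → ℂ) →ₗ[ℂ] (Fin 4 → ℂ)) : Prop :=
  (∀ v ∈ Vplus, U v ∈ Vminus) ∧
  (∀ v ∈ Vplus, ∀ w ∈ Vplus, (U v) ⬝ᵥ star (U w) = v ⬝ᵥ star w) ∧
  (∀ w ∈ Vminus, ∃ v ∈ Vplus, U v = w)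

/-- `S_U = {v + vU : v ∈ V₊}`. -/
def SU (U : (Fin 4 → ℂ) →ₗ[ℂ] (Fin 4 → ℂ)) : Set (Fin 4 → ℂ) :=
  {x | ∃ v ∈ Vplus, x = v + U v}

/-!
Write `J = P₊ - P₋` with `P₊ + P₋ = 1` complementary orthogonal projections. Then
`x J y* = (x P₊)(y P₊)* - (x P₋)(y P₋)*`, so on a `J`-isotropic subspace `S` both projections
preserve the Hermitian product and are in particular injective. As `J` is invertible, a subspace
equal to its `J`-orthogonal complement has dimension `n / 2`; since `dim V₊ + dim V₋ = n`, both
projections restrict to isomorphisms on `S`, and `U = p₋ ∘ p₊⁻¹` is a unitary `V₊ → V₋` whose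
graph is `S`.
-/

section JOrthogonal

variable {ι : Type*} [Fintype ι]

def jOrthogonal (J : Matrix ι ι ℂ) (S : Submodule ℂ (ι → ℂ)) : Submodule ℂ (ι → ℂ) where
  carrier := {w | ∀ s ∈ S, w ᵥ* J ⬝ᵥ star s = 0}
  add_mem' hv hw s hs := by simp [add_vecMul, add_dotProduct, hv s hs, hw s hs]
  zero_mem' _ _ := by simp
  smul_mem' c v hv s hs := by simp [smul_vecMul, hv s hs]

theorem jOrthogonal_eq_comap_orthogonal (J : Matrix ι ι ℂ) (S : Submodule ℂ (ι → ℂ)) :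
    jOrthogonal J S = ((S.map (WithLp.linearEquiv 2 ℂ (ι → ℂ)).symm.toLinearMap)ᗮ).comap
      ((WithLp.linearEquiv 2 ℂ (ι → ℂ)).symm.toLinearMap ∘ₗ vecMulLinear J) := by
  ext w
  simp only [Submodule.mem_comap, Submodule.mem_orthogonal, Submodule.mem_map,
    forall_exists_index, and_imp, forall_apply_eq_imp_iff₂]
  rfl

variable [DecidableEq ι]

theorem finrank_add_finrank_jOrthogonal {J : Matrix ι ι ℂ} (hJ : IsUnit J)
    (S : Submodule ℂ (ι → ℂ)) :
    Module.finrank ℂ S + Module.finrank ℂ (jOrthogonal J S) = Fintype.card ι := by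
  let e := (WithLp.linearEquiv 2 ℂ (ι → ℂ)).symm
  let eJ := LinearEquiv.ofBijective (vecMulLinear J)
    ⟨vecMul_injective_iff_isUnit.2 hJ, vecMul_surjective_iff_isUnit.2 hJ⟩
  have h := Submodule.finrank_add_finrank_orthogonal (S.map e.toLinearMap)
  rw [e.finrank_map_eq, finrank_euclideanSpace] at h
  have hS : jOrthogonal J S = ((S.map e.toLinearMap)ᗮ).comap (eJ.trans e).toLinearMap :=
    jOrthogonal_eq_comap_orthogonal J S
  rwa [hS, Submodule.comap_equiv_eq_map_symm, LinearEquiv.finrank_map_eq]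

end JOrthogonal

section StarProjection

variable {ι : Type*} [Fintype ι] {P Q : Matrix ι ι ℂ}

theorem IsStarProjection.vecMul_dotProduct_star_vecMul (hP : IsStarProjection P)
    (x y : ι → ℂ) : x ᵥ* P ⬝ᵥ star (y ᵥ* P) = x ᵥ* P ⬝ᵥ star y := by
  rw [star_vecMul, dotProduct_mulVec, vecMul_vecMul, ← star_eq_conjTranspose,
    hP.isSelfAdjoint.star_eq, hP.isIdempotentElem.eq]

theorem vecMul_sub_dotProduct_star (hP : IsStarProjection P) (hQ : IsStarProjection Q)
    (x y : ι → ℂ) :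
    x ᵥ* (P - Q) ⬝ᵥ star y = x ᵥ* P ⬝ᵥ star (y ᵥ* P) - x ᵥ* Q ⬝ᵥ star (y ᵥ* Q) := by
  rw [hP.vecMul_dotProduct_star_vecMul, hQ.vecMul_dotProduct_star_vecMul, vecMul_sub,
    sub_dotProduct]

variable [DecidableEq ι]

theorem vecMul_add_vecMul_of_add_eq_one (hPQ : P + Q = 1) (x : ι → ℂ) :
    x ᵥ* P + x ᵥ* Q = x := by
  rw [← vecMul_add, hPQ, vecMul_one]

theorem IsStarProjection.isUnit_sub (hP : IsStarProjection P) (hPQ : P + Q = 1) :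
    IsUnit (P - Q) := by
  obtain rfl : Q = 1 - P := eq_sub_of_add_eq' hPQ
  have h : (P - (1 - P)) * (P - (1 - P)) = 1 :=
    calc (P - (1 - P)) * (P - (1 - P)) = 4 • (P * P - P) + 1 := by noncomm_ring
      _ = 1 := by rw [hP.isIdempotentElem.eq, sub_self, smul_zero, zero_add]
  exact ⟨⟨_, _, h, h⟩, rfl⟩

theorem range_vecMulLinear_eq_ker (hP : IsIdempotentElem P) (hPQ : P + Q = 1) :
    LinearMap.range (vecMulLinear Q) = LinearMap.ker (vecMulLinear P) := by
  obtain rfl : Q = 1 - P := eq_sub_of_add_eq' hPQ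
  ext x
  refine ⟨?_, fun hx => ⟨x, ?_⟩⟩
  · rintro ⟨y, rfl⟩
    simp [vecMul_vecMul, hP.eq]
  · simpa [vecMul_sub, sub_eq_self] using hx

theorem finrank_range_vecMulLinear_add_finrank_range (hP : IsIdempotentElem P)
    (hPQ : P + Q = 1) :
    Module.finrank ℂ (LinearMap.range (vecMulLinear P)) +
      Module.finrank ℂ (LinearMap.range (vecMulLinear Q)) = Fintype.card ι := by
  rw [range_vecMulLinear_eq_ker hP hPQ, LinearMap.finrank_range_add_finrank_ker,
    Module.finrank_fintype_fun_eq_card]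

end StarProjection

section Lagrangian

variable {ι : Type*} [Fintype ι] {P Q : Matrix ι ι ℂ} {S : Submodule ℂ (ι → ℂ)}

def restrictVecMul (P : Matrix ι ι ℂ) (S : Submodule ℂ (ι → ℂ)) :
    S →ₗ[ℂ] LinearMap.range (vecMulLinear P) :=
  (vecMulLinear P ∘ₗ S.subtype).codRestrict _ fun _ => LinearMap.mem_range_self _ _

@[simp]
theorem coe_restrictVecMul_apply (s : S) : (restrictVecMul P S s : ι → ℂ) = (s : ι → ℂ) ᵥ* P :=
  rfl

theorem dotProduct_star_vecMul_eq_of_le_jOrthogonal (hP : IsStarProjection P)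
    (hQ : IsStarProjection Q) (hS : S ≤ jOrthogonal (P - Q) S) ⦃s : ι → ℂ⦄ (hs : s ∈ S)
    ⦃t : ι → ℂ⦄ (ht : t ∈ S) : s ᵥ* P ⬝ᵥ star (t ᵥ* P) = s ᵥ* Q ⬝ᵥ star (t ᵥ* Q) :=
  sub_eq_zero.1 (vecMul_sub_dotProduct_star hP hQ s t ▸ hS hs t ht)

theorem exists_linearMap_vecMul_eq (h : Function.Bijective (restrictVecMul P S))
    (Q : Matrix ι ι ℂ) : ∃ U : (ι → ℂ) →ₗ[ℂ] (ι → ℂ), ∀ s ∈ S, U (s ᵥ* P) = s ᵥ* Q := by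
  let e := LinearEquiv.ofBijective _ h
  obtain ⟨U, hU⟩ := LinearMap.exists_extend (vecMulLinear Q ∘ₗ S.subtype ∘ₗ e.symm.toLinearMap)
  refine ⟨U, fun s hs => ?_⟩
  simpa [e] using LinearMap.congr_fun hU (e ⟨s, hs⟩)

variable [DecidableEq ι]

open scoped ComplexOrder in
theorem injective_restrictVecMul (hPQ : P + Q = 1)
    (hS : ∀ s ∈ S, s ᵥ* P ⬝ᵥ star (s ᵥ* P) = s ᵥ* Q ⬝ᵥ star (s ᵥ* Q)) :
    Function.Injective (restrictVecMul P S) := by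
  refine (injective_iff_map_eq_zero _).2 fun ⟨s, hs⟩ h => ?_
  have hP0 : s ᵥ* P = 0 := congrArg Subtype.val h
  have hQ0 : s ᵥ* Q = 0 := by simpa [hP0] using (hS s hs).symm
  ext1
  change s = 0
  rw [← vecMul_add_vecMul_of_add_eq_one hPQ s, hP0, hQ0, add_zero]

theorem bijective_restrictVecMul_of_eq_jOrthogonal (hP : IsStarProjection P) (hPQ : P + Q = 1)
    (hS : S = jOrthogonal (P - Q) S) :
    Function.Bijective (restrictVecMul P S) ∧ Function.Bijective (restrictVecMul Q S) := by
  have hQ : IsStarProjection Q := eq_sub_of_add_eq' hPQ ▸ hP.one_sub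
  have hiso := dotProduct_star_vecMul_eq_of_le_jOrthogonal hP hQ hS.le
  have hinjP := injective_restrictVecMul hPQ fun s hs => hiso hs hs
  have hinjQ := injective_restrictVecMul (add_comm P Q ▸ hPQ) fun s hs => (hiso hs hs).symm
  have hdimS := finrank_add_finrank_jOrthogonal (hP.isUnit_sub hPQ) S
  rw [← hS] at hdimS
  have hdimPQ := finrank_range_vecMulLinear_add_finrank_range hP.isIdempotentElem hPQ
  have hleP := LinearMap.finrank_le_finrank_of_injective hinjP
  have hleQ := LinearMap.finrank_le_finrank_of_injective hinjQ
  exact ⟨⟨hinjP, (LinearMap.injective_iff_surjective_of_finrank_eq_finrank (by omega)).1 hinjP⟩,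
    ⟨hinjQ, (LinearMap.injective_iff_surjective_of_finrank_eq_finrank (by omega)).1 hinjQ⟩⟩

theorem exists_unitary_graph_of_eq_jOrthogonal (hP : IsStarProjection P) (hPQ : P + Q = 1)
    (hS : S = jOrthogonal (P - Q) S) :
    ∃ U : (ι → ℂ) →ₗ[ℂ] (ι → ℂ),
      (∀ v ∈ LinearMap.range (vecMulLinear P), U v ∈ LinearMap.range (vecMulLinear Q)) ∧
      (∀ v ∈ LinearMap.range (vecMulLinear P), ∀ w ∈ LinearMap.range (vecMulLinear P),
        U v ⬝ᵥ star (U w) = v ⬝ᵥ star w) ∧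
      (∀ w ∈ LinearMap.range (vecMulLinear Q), ∃ v ∈ LinearMap.range (vecMulLinear P), U v = w) ∧
      (S : Set (ι → ℂ)) = {x | ∃ v ∈ LinearMap.range (vecMulLinear P), x = v + U v} := by
  have hiso := dotProduct_star_vecMul_eq_of_le_jOrthogonal hP
    (eq_sub_of_add_eq' hPQ ▸ hP.one_sub) hS.le
  obtain ⟨hbijP, hbijQ⟩ := bijective_restrictVecMul_of_eq_jOrthogonal hP hPQ hS
  obtain ⟨U, hU⟩ := exists_linearMap_vecMul_eq hbijP Q
  have hV : ∀ v ∈ LinearMap.range (vecMulLinear P), ∃ s ∈ S, s ᵥ* P = v := fun v hv => by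
    obtain ⟨⟨s, hs⟩, h⟩ := hbijP.2 ⟨v, hv⟩
    exact ⟨s, hs, congrArg Subtype.val h⟩
  refine ⟨U, fun v hv => ?_, fun v hv w hw => ?_, fun w hw => ?_,
    Set.ext fun x => ⟨fun hx => ?_, ?_⟩⟩
  · obtain ⟨s, hs, rfl⟩ := hV v hv
    rw [hU s hs]
    exact LinearMap.mem_range_self _ _
  · obtain ⟨s, hs, rfl⟩ := hV v hv
    obtain ⟨t, ht, rfl⟩ := hV w hw
    rw [hU s hs, hU t ht, hiso hs ht]
  · obtain ⟨⟨s, hs⟩, h⟩ := hbijQ.2 ⟨w, hw⟩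
    exact ⟨s ᵥ* P, LinearMap.mem_range_self _ _, (hU s hs).trans (congrArg Subtype.val h)⟩
  · exact ⟨x ᵥ* P, LinearMap.mem_range_self _ _,
      by rw [hU x hx, vecMul_add_vecMul_of_add_eq_one hPQ]⟩
  · rintro ⟨v, hv, rfl⟩
    obtain ⟨s, hs, rfl⟩ := hV v hv
    rwa [hU s hs, vecMul_add_vecMul_of_add_eq_one hPQ]

end Lagrangian

theorem matJ_mul_matJ : matJ * matJ = 1 := by
  ext i j
  fin_cases i <;> fin_cases j <;> simp [matJ, mul_apply, Fin.sum_univ_four, one_apply]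

theorem isSelfAdjoint_matJ : IsSelfAdjoint matJ := by
  ext i j
  fin_cases i <;> fin_cases j <;> simp [matJ]

theorem isStarProjection_Pplus : IsStarProjection Pplus where
  isIdempotentElem := by
    simp only [IsIdempotentElem, Pplus, smul_mul_smul, mul_add, add_mul, one_mul, mul_one,
      matJ_mul_matJ]
    module
  isSelfAdjoint := by
    simp [IsSelfAdjoint, Pplus, isSelfAdjoint_matJ.star_eq]

theorem Pplus_add_Pminus : Pplus + Pminus = 1 := by
  simp only [Pplus, Pminus]
  module

theorem Pplus_sub_Pminus : Pplus - Pminus = matJ := by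
  simp only [Pplus, Pminus]
  module

theorem stmt9 (S : Submodule ℂ (Fin 4 → ℂ))
    (hS : (S : Set (Fin 4 → ℂ)) =
      {w : Fin 4 → ℂ | ∀ s ∈ S, Matrix.vecMul w matJ ⬝ᵥ star s = 0}) :
    ∃ U : (Fin 4 → ℂ) →ₗ[ℂ] (Fin 4 → ℂ),
      IsUnitaryPlusMinus U ∧ (S : Set (Fin 4 → ℂ)) = SU U := by
  have hS_eq : S = jOrthogonal (Pplus - Pminus) S := by
    rw [Pplus_sub_Pminus]
    exact SetLike.coe_injective hS
  obtain ⟨U, hmaps, hiso, hsurj, hgraph⟩ :=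
    exists_unitary_graph_of_eq_jOrthogonal isStarProjection_Pplus Pplus_add_Pminus hS_eq
  exact ⟨U, ⟨hmaps, hiso, hsurj⟩, hgraph⟩
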